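/- Let A ∈ ℝ^{n×n} be diagonalizable over ℂ with all eigenvalues of modulus 1, let B ∈ ℝ^{n×m} with (A,B) reachable, let X ∈ ℝ^{n×n} be symmetric positive definite with X = AᵀXA and I_m − BᵀXB positive semidefinite, and set F = BᵀXA. Then for every z ∈ ℂ with |z| > 1, the matrix zI − A + BF is invertible and, with T_F(z) = F(zI − A + BF)^{−1}B, the Hermitian matrix I_m − T_F(z)* T_F(z) is positive semidefinite. In other words, the H∞ norm of the closed-loop transfer matrix T_F(z) is at most 1. -/

import Mathlib

open Matrix
open scoped ComplexOrder

/-!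
With `F = BᴴXA` and the closed loop `K = A - BF`, the Stein equation `AᴴXA = X` gives
`X - KᴴXK = FᴴF + Fᴴ(I - BᴴXB)F ⪰ 0`; as `X ≻ 0`, no eigenvalue `z` of `K` has `|z| > 1`, so
`zI - K` is invertible. For `N = (zI - K)⁻¹B` and `W = I - FN` one has `zN = AN + BW`, and
expanding `|z|² NᴴXN` with the Stein equation yields
`I - (FN)ᴴ(FN) = (|z|² - 1) NᴴXN + Wᴴ(I - BᴴXB)W ⪰ 0`.
-/

namespace Matrix

section Complexification

variable {l m n : Type*}

theorem map_ofReal_mul [Fintype m] (M : Matrix l m ℝ) (N : Matrix m n ℝ) :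
    (M * N).map Complex.ofReal = M.map Complex.ofReal * N.map Complex.ofReal :=
  Matrix.map_mul (f := Complex.ofRealHom)

theorem conjTranspose_map_ofReal (M : Matrix m n ℝ) :
    (M.map Complex.ofReal)ᴴ = Mᵀ.map Complex.ofReal := by
  rw [← conjTranspose_map _ fun _ ↦ (Complex.conj_ofReal _).symm,
    conjTranspose_eq_transpose_of_trivial]

variable [Fintype n] [DecidableEq n] {M : Matrix n n ℝ}

theorem PosSemidef.map_ofReal (hM : M.PosSemidef) : (M.map Complex.ofReal).PosSemidef := by
  open scoped MatrixOrder in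
  obtain ⟨C, rfl⟩ := CStarAlgebra.nonneg_iff_eq_star_mul_self.mp hM.nonneg
  rw [star_eq_conjTranspose, conjTranspose_eq_transpose_of_trivial, map_ofReal_mul,
    ← conjTranspose_map_ofReal]
  exact posSemidef_conjTranspose_mul_self _

theorem PosDef.map_ofReal (hM : M.PosDef) : (M.map Complex.ofReal).PosDef :=
  hM.posSemidef.map_ofReal.posDef_iff_isUnit.mpr (hM.isUnit.map Complex.ofRealHom.mapMatrix)

end Complexification

variable {ι κ ν : Type*} [Fintype ι] [Fintype κ]

theorem conjTranspose_mul_mul_add_of_stein {R : Type*} [Ring R] [StarRing R]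
    {A X : Matrix ι ι R} (hX : X.IsHermitian) (hA : Aᴴ * X * A = X) (B : Matrix ι κ R)
    (N : Matrix ι ν R) (W : Matrix κ ν R) :
    (A * N + B * W)ᴴ * X * (A * N + B * W) =
      Nᴴ * X * N + (Bᴴ * X * A * N)ᴴ * W + Wᴴ * (Bᴴ * X * A * N) + Wᴴ * (Bᴴ * X * B) * W := by
  have hAXB : Aᴴ * X * B = (Bᴴ * X * A)ᴴ := by
    simp only [conjTranspose_mul, conjTranspose_conjTranspose, hX.eq, Matrix.mul_assoc]
  calc (A * N + B * W)ᴴ * X * (A * N + B * W)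
      = Nᴴ * (Aᴴ * X * A) * N + Nᴴ * (Aᴴ * X * B) * W + Wᴴ * (Bᴴ * X * A) * N
          + Wᴴ * (Bᴴ * X * B) * W := by
        simp only [conjTranspose_add, conjTranspose_mul, Matrix.add_mul, Matrix.mul_add,
          Matrix.mul_assoc]
        abel
    _ = _ := by
        rw [hA, hAXB]
        simp only [conjTranspose_mul, conjTranspose_conjTranspose, Matrix.mul_assoc]

variable {𝕜 : Type*} [RCLike 𝕜] [DecidableEq κ] {A X : Matrix ι ι 𝕜} {B : Matrix ι κ 𝕜}

theorem one_sub_conjTranspose_mul_self_of_stein (hX : X.IsHermitian) (hA : Aᴴ * X * A = X)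
    {z : 𝕜} {N : Matrix ι κ 𝕜} (hN : z • N = A * N + B * (1 - Bᴴ * X * A * N)) :
    1 - (Bᴴ * X * A * N)ᴴ * (Bᴴ * X * A * N) =
      (star z * z - 1) • (Nᴴ * X * N) +
        (1 - Bᴴ * X * A * N)ᴴ * (1 - Bᴴ * X * B) * (1 - Bᴴ * X * A * N) := by
  set W := 1 - Bᴴ * X * A * N
  have hFN : Bᴴ * X * A * N = 1 - W := (sub_sub_cancel _ _).symm
  have key := conjTranspose_mul_mul_add_of_stein hX hA B N W
  rw [← hN, conjTranspose_smul, Matrix.smul_mul, Matrix.smul_mul, Matrix.mul_smul, smul_smul,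
    hFN] at key
  rw [hFN, sub_smul, one_smul, key]
  simp only [conjTranspose_sub, conjTranspose_one, mul_sub, sub_mul, one_mul, mul_one]
  abel

variable [DecidableEq ι]

theorem posSemidef_sub_closedLoop_stein (hX : X.IsHermitian) (hA : Aᴴ * X * A = X)
    (hB : (1 - Bᴴ * X * B).PosSemidef) :
    (X - (A - B * (Bᴴ * X * A))ᴴ * X * (A - B * (Bᴴ * X * A))).PosSemidef := by
  set F := Bᴴ * X * A
  have hK := conjTranspose_mul_mul_add_of_stein hX hA B 1 (-F)
  simp only [Matrix.mul_one, Matrix.mul_neg, ← sub_eq_add_neg, conjTranspose_one,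
    Matrix.one_mul, conjTranspose_neg, Matrix.neg_mul] at hK
  have hGap : X - (A - B * F)ᴴ * X * (A - B * F) = Fᴴ * F + Fᴴ * (1 - Bᴴ * X * B) * F := by
    rw [hK]; simp only [Matrix.mul_sub, Matrix.sub_mul, Matrix.mul_one]; abel
  rw [hGap]
  exact (posSemidef_conjTranspose_mul_self F).add (hB.conjTranspose_mul_mul_same F)

theorem isUnit_smul_one_sub_of_posSemidef_sub {K : Matrix ι ι 𝕜} (hX : X.PosDef)
    (hK : (X - Kᴴ * X * K).PosSemidef) {z : 𝕜} (hz : 1 < ‖z‖) : IsUnit (z • 1 - K) := by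
  rw [isUnit_iff_isUnit_det, isUnit_iff_ne_zero]
  intro hdet
  obtain ⟨v, hv, hKv⟩ := exists_mulVec_eq_zero_iff.mpr hdet
  have hKv : K *ᵥ v = z • v := by
    rw [sub_mulVec, smul_mulVec, one_mulVec, sub_eq_zero] at hKv
    exact hKv.symm
  set q := star v ⬝ᵥ X *ᵥ v
  have hq : 0 < q := hX.dotProduct_mulVec_pos hv
  have hKXK : star v ⬝ᵥ (Kᴴ * X * K) *ᵥ v = star (K *ᵥ v) ⬝ᵥ X *ᵥ (K *ᵥ v) := by
    rw [← mulVec_mulVec, ← mulVec_mulVec, dotProduct_mulVec, ← star_mulVec]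
  have hform : star v ⬝ᵥ (X - Kᴴ * X * K) *ᵥ v = -(((‖z‖ ^ 2 - 1 : ℝ) : 𝕜) * q) := by
    rw [sub_mulVec, dotProduct_sub, hKXK, hKv, star_smul, mulVec_smul, smul_dotProduct,
      dotProduct_smul, smul_eq_mul, smul_eq_mul, ← mul_assoc, RCLike.star_def, RCLike.conj_mul]
    push_cast
    ring
  have hpos : 0 < ((‖z‖ ^ 2 - 1 : ℝ) : 𝕜) * q :=
    mul_pos (RCLike.ofReal_pos.mpr (by nlinarith [norm_nonneg z])) hq
  have hnonneg := hform ▸ hK.dotProduct_mulVec_nonneg v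
  exact lt_irrefl _ (hpos.trans_le (neg_nonneg.mp hnonneg))

theorem isUnit_and_posSemidef_one_sub_transfer (hX : X.PosDef) (hA : Aᴴ * X * A = X)
    (hB : (1 - Bᴴ * X * B).PosSemidef) {z : 𝕜} (hz : 1 < ‖z‖) :
    IsUnit (z • 1 - A + B * (Bᴴ * X * A)) ∧
      (1 - (Bᴴ * X * A * (z • 1 - A + B * (Bᴴ * X * A))⁻¹ * B)ᴴ *
        (Bᴴ * X * A * (z • 1 - A + B * (Bᴴ * X * A))⁻¹ * B)).PosSemidef := by
  set F := Bᴴ * X * A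
  set M := z • 1 - A + B * F
  have hM : IsUnit M := by
    rw [show M = z • 1 - (A - B * F) from sub_add _ _ _]
    exact isUnit_smul_one_sub_of_posSemidef_sub hX
      (posSemidef_sub_closedLoop_stein hX.isHermitian hA hB) hz
  refine ⟨hM, ?_⟩
  set N := M⁻¹ * B
  have hN : z • N = A * N + B * (1 - F * N) := by
    have hMN : M * N = B := by
      rw [← Matrix.mul_assoc, mul_nonsing_inv _ ((isUnit_iff_isUnit_det M).mp hM), Matrix.one_mul]
    have hMN' : M * N = z • N - A * N + B * (F * N) := by
      simp only [M, Matrix.add_mul, Matrix.sub_mul, Matrix.smul_mul, Matrix.one_mul,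
        Matrix.mul_assoc]
    calc z • N = M * N + A * N - B * (F * N) := by rw [hMN']; abel
      _ = A * N + B * (1 - F * N) := by rw [hMN, Matrix.mul_sub, Matrix.mul_one]; abel
  have hzz : 0 ≤ star z * z - 1 := by
    rw [RCLike.star_def, RCLike.conj_mul, ← RCLike.ofReal_pow, ← RCLike.ofReal_one,
      ← RCLike.ofReal_sub, RCLike.ofReal_nonneg]
    nlinarith [norm_nonneg z]
  rw [Matrix.mul_assoc F, one_sub_conjTranspose_mul_self_of_stein hX.isHermitian hA hN]
  exact (hX.posSemidef.conjTranspose_mul_mul_same N).smul hzz |>.add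
    (hB.conjTranspose_mul_mul_same _)

end Matrix

theorem stmt12_general (n m : ℕ)
    (A : Matrix (Fin n) (Fin n) ℝ) (B : Matrix (Fin n) (Fin m) ℝ)
    (X : Matrix (Fin n) (Fin n) ℝ) (hX : X.PosDef) (hXA : X = Aᵀ * X * A)
    (hXB : ((1 : Matrix (Fin m) (Fin m) ℝ) - Bᵀ * X * B).PosSemidef)
    (F : Matrix (Fin m) (Fin n) ℝ) (hF : F = Bᵀ * X * A)
    (Ac : Matrix (Fin n) (Fin n) ℂ) (hAc : Ac = A.map Complex.ofReal)
    (Bc : Matrix (Fin n) (Fin m) ℂ) (hBc : Bc = B.map Complex.ofReal)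
    (Fc : Matrix (Fin m) (Fin n) ℂ) (hFc : Fc = F.map Complex.ofReal) :
    ∀ z : ℂ, 1 < ‖z‖ →
      IsUnit (z • (1 : Matrix (Fin n) (Fin n) ℂ) - Ac + Bc * Fc) ∧
      ((1 : Matrix (Fin m) (Fin m) ℂ) -
        (Fc * (z • (1 : Matrix (Fin n) (Fin n) ℂ) - Ac + Bc * Fc)⁻¹ * Bc)ᴴ *
        (Fc * (z • (1 : Matrix (Fin n) (Fin n) ℂ) - Ac + Bc * Fc)⁻¹ * Bc)).PosSemidef := by
  intro z hz
  subst hAc hBc hFc hF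
  have hStein : (A.map Complex.ofReal)ᴴ * X.map Complex.ofReal * A.map Complex.ofReal =
      X.map Complex.ofReal := by
    rw [conjTranspose_map_ofReal, ← map_ofReal_mul, ← map_ofReal_mul, ← hXA]
  have hGain : (Bᵀ * X * A).map Complex.ofReal =
      (B.map Complex.ofReal)ᴴ * X.map Complex.ofReal * A.map Complex.ofReal := by
    rw [conjTranspose_map_ofReal, ← map_ofReal_mul, ← map_ofReal_mul]
  have hGram :
      (1 - (B.map Complex.ofReal)ᴴ * X.map Complex.ofReal * B.map Complex.ofReal).PosSemidef := by
    rw [conjTranspose_map_ofReal, ← map_ofReal_mul, ← map_ofReal_mul,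
      ← Matrix.map_one _ Complex.ofReal_zero Complex.ofReal_one,
      ← Matrix.map_sub _ Complex.ofReal_sub]
    exact hXB.map_ofReal
  rw [hGain]
  exact Matrix.isUnit_and_posSemidef_one_sub_transfer hX.map_ofReal hStein hGram hz

/-- Lemma 3: for the feedback gain `F = BᵀXA` of Lemma 2, the closed-loop
transfer matrix `T_F(z) = F(zI − A + BF)⁻¹B` satisfies
`I − T_F(z)* T_F(z) ⪰ 0` for all `|z| > 1`, i.e., `‖T_F‖_{H∞} ≤ 1`. -/
theorem stmt12 (n m : ℕ)
    (A : Matrix (Fin n) (Fin n) ℝ) (B : Matrix (Fin n) (Fin m) ℝ)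
    (hdiag : ∃ P : Matrix (Fin n) (Fin n) ℂ, IsUnit P ∧
      (P⁻¹ * A.map Complex.ofReal * P).IsDiag)
    (hspec : ∀ c ∈ spectrum ℂ (A.map Complex.ofReal), ‖c‖ = 1)
    (hreach : ∀ w : Fin n → ℝ, (∀ k : ℕ, Bᵀ *ᵥ ((Aᵀ) ^ k *ᵥ w) = 0) → w = 0)
    (X : Matrix (Fin n) (Fin n) ℝ) (hX : X.PosDef) (hXA : X = Aᵀ * X * A)
    (hXB : ((1 : Matrix (Fin m) (Fin m) ℝ) - Bᵀ * X * B).PosSemidef)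
    (F : Matrix (Fin m) (Fin n) ℝ) (hF : F = Bᵀ * X * A)
    (Ac : Matrix (Fin n) (Fin n) ℂ) (hAc : Ac = A.map Complex.ofReal)
    (Bc : Matrix (Fin n) (Fin m) ℂ) (hBc : Bc = B.map Complex.ofReal)
    (Fc : Matrix (Fin m) (Fin n) ℂ) (hFc : Fc = F.map Complex.ofReal) :
    ∀ z : ℂ, 1 < ‖z‖ →
      IsUnit (z • (1 : Matrix (Fin n) (Fin n) ℂ) - Ac + Bc * Fc) ∧
      ((1 : Matrix (Fin m) (Fin m) ℂ) -
        (Fc * (z • (1 : Matrix (Fin n) (Fin n) ℂ) - Ac + Bc * Fc)⁻¹ * Bc)ᴴ *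
        (Fc * (z • (1 : Matrix (Fin n) (Fin n) ℂ) - Ac + Bc * Fc)⁻¹ * Bc)).PosSemidef :=
  stmt12_general n m A B X hX hXA hXB F hF Ac hAc Bc hBc Fc hFc
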